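/- Let X₁,…,X_m be iid real random variables with an atomless distribution, and let Y₁,…,Y_m be iid real random variables with a (possibly different) atomless distribution. For a window size h with 2h ≤ m and h ≤ τ ≤ m−h, define T_τ(X) = Σ_{i=τ+1}^{τ+h} Σ_{j=τ−h+1}^{τ+h} 1{X_j ≤ X_i}, and define T_τ(Y) analogously from Y₁,…,Y_m. Then the random vectors (T_τ(X))_{h≤τ≤m−h} and (T_τ(Y))_{h≤τ≤m−h} have the same joint distribution. -/

import Mathlib

/-!
Under an iid sample from an atomless law the coordinates are almost surely distinct, so almost
every sample lies in exactly one of the `m!` open cells `{x | x ∘ σ strictly increasing}`.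
These cells are permuted by the coordinate permutations, which preserve the product law, so each
has probability `1/m!`. A statistic that depends only on the relative order of the coordinates,
such as the vector of windowed Wilcoxon statistics, is constant on each cell; hence its law is
the uniform mixture of `m!` point masses, whatever the sampling law.
-/

open MeasureTheory ProbabilityTheory Filter

/-- The windowed two-sample Wilcoxon/Mann–Whitney statistic for the window `(τ−h, τ+h]`
split at `τ`, computed from the sequence `X` at sample point `ω`:
`T_τ = Σ_{i=τ+1}^{τ+h} Σ_{j=τ−h+1}^{τ+h} 1{X_j ≤ X_i}`. -/
noncomputable def wilcoxonStat {Ω : Type*} (h : ℕ) (X : ℕ → Ω → ℝ) (τ : ℕ) (ω : Ω) : ℝ :=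
  ∑ i ∈ Finset.Ioc τ (τ + h), ∑ j ∈ Finset.Ioc (τ - h) (τ + h),
    (if X j ω ≤ X i ω then (1 : ℝ) else 0)

open scoped ENNReal Nat

section RankStatistic

variable {n : ℕ}

def IsRankStatistic {ι β : Type*} (g : (ι → ℝ) → β) : Prop :=
  ∀ ⦃x y : ι → ℝ⦄, (∀ a b, x a ≤ x b ↔ y a ≤ y b) → g x = g y

def sortRegion (σ : Equiv.Perm (Fin n)) : Set (Fin n → ℝ) :=
  {x | StrictMono (x ∘ σ)}

def rankVector (σ : Equiv.Perm (Fin n)) : Fin n → ℝ :=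
  fun i => (σ.symm i : ℕ)

lemma measurableSet_sortRegion (σ : Equiv.Perm (Fin n)) : MeasurableSet (sortRegion σ) := by
  have : sortRegion σ = ⋂ (a : Fin n) (b : Fin n) (_ : a < b), {x | x (σ a) < x (σ b)} := by
    ext x
    simp [sortRegion, StrictMono]
  rw [this]
  exact .iInter fun a => .iInter fun b => .iInter fun _ =>
    measurableSet_lt (measurable_pi_apply _) (measurable_pi_apply _)

lemma le_iff_of_mem_sortRegion {σ : Equiv.Perm (Fin n)} {x : Fin n → ℝ}
    (hx : x ∈ sortRegion σ) (a b : Fin n) : x a ≤ x b ↔ σ.symm a ≤ σ.symm b := by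
  simpa using (hx : StrictMono (x ∘ σ)).le_iff_le (a := σ.symm a) (b := σ.symm b)

lemma rankVector_mem_sortRegion (σ : Equiv.Perm (Fin n)) : rankVector σ ∈ sortRegion σ :=
  fun a b hab => by simpa [rankVector] using hab

lemma IsRankStatistic.eq_of_mem_sortRegion {β : Type*} {g : (Fin n → ℝ) → β}
    (hg : IsRankStatistic g) {σ : Equiv.Perm (Fin n)} {x : Fin n → ℝ}
    (hx : x ∈ sortRegion σ) : g x = g (rankVector σ) :=
  hg fun a b => by
    rw [le_iff_of_mem_sortRegion hx, le_iff_of_mem_sortRegion (rankVector_mem_sortRegion σ)]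

lemma injective_of_mem_sortRegion {σ : Equiv.Perm (Fin n)} {x : Fin n → ℝ}
    (hx : x ∈ sortRegion σ) : Function.Injective x :=
  (σ.injective_comp x).1 (hx : StrictMono (x ∘ σ)).injective

lemma pairwise_disjoint_sortRegion :
    Pairwise (Function.onFun Disjoint (sortRegion (n := n))) := by
  intro σ τ hστ
  refine Set.disjoint_left.2 fun x hσ hτ => hστ ?_
  have heq := Tuple.unique_monotone (hσ : StrictMono (x ∘ σ)).monotone
    (hτ : StrictMono (x ∘ τ)).monotone
  exact Equiv.ext fun i => injective_of_mem_sortRegion hσ (congrFun heq i)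

end RankStatistic

section Measure

variable (μ : Measure ℝ)

lemma measure_pi_setOf_apply_eq_apply_eq_zero {ι : Type*} [Fintype ι] [IsProbabilityMeasure μ]
    [NullSingletonClass μ] {i j : ι} (hij : i ≠ j) :
    Measure.pi (fun _ : ι => μ) {x | x i = x j} = 0 := by
  have hindep : IndepFun (fun x : ι → ℝ => x i) (fun x => x j) (Measure.pi fun _ => μ) :=
    (iIndepFun_pi (X := fun _ => id) fun _ => aemeasurable_id).indepFun hij
  have hlaw : (Measure.pi fun _ : ι => μ).map (fun x => (x i, x j)) = μ.prod μ := by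
    rw [(indepFun_iff_map_prod_eq_prod_map_map
      (measurable_pi_apply i).aemeasurable (measurable_pi_apply j).aemeasurable).1 hindep,
      (measurePreserving_eval _ i).map_eq, (measurePreserving_eval _ j).map_eq]
  have hdiag : MeasurableSet {p : ℝ × ℝ | p.1 = p.2} := measurableSet_diagonal
  change Measure.pi (fun _ : ι => μ) ((fun x => (x i, x j)) ⁻¹' {p : ℝ × ℝ | p.1 = p.2}) = 0
  rw [← Measure.map_apply (by fun_prop) hdiag, hlaw, Measure.measure_prod_null hdiag]
  exact Eventually.of_forall fun a => by simp [Set.preimage]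

variable {n : ℕ}

lemma measure_compl_iUnion_sortRegion [IsProbabilityMeasure μ] [NullSingletonClass μ] :
    Measure.pi (fun _ : Fin n => μ) (⋃ σ, sortRegion σ)ᶜ = 0 := by
  have hsub :
      (⋃ σ, sortRegion σ)ᶜ ⊆ ⋃ (i : Fin n) (j : Fin n) (_ : i ≠ j), {x | x i = x j} := by
    intro x hx
    by_contra hx'
    simp only [Set.mem_iUnion, not_exists] at hx'
    refine hx (Set.mem_iUnion.2 ⟨Tuple.sort x, ?_⟩)
    refine (Tuple.monotone_sort x).strictMono_of_injective fun a b hab => ?_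
    by_contra hne
    exact hx' _ _ ((Tuple.sort x).injective.ne hne) hab
  exact measure_mono_null hsub <| measure_iUnion_null fun i => measure_iUnion_null fun j =>
    measure_iUnion_null fun hij => measure_pi_setOf_apply_eq_apply_eq_zero μ hij

lemma measure_sortRegion_eq_measure_sortRegion_one [SigmaFinite μ] (σ : Equiv.Perm (Fin n)) :
    Measure.pi (fun _ : Fin n => μ) (sortRegion σ) =
      Measure.pi (fun _ : Fin n => μ) (sortRegion 1) := by
  have hσ := measurePreserving_piCongrLeft (fun _ : Fin n => μ) σ.symm
  have hcomp : ⇑(MeasurableEquiv.piCongrLeft (fun _ => ℝ) σ.symm) = fun x => x ∘ σ := by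
    ext x b
    rw [MeasurableEquiv.coe_piCongrLeft, Equiv.piCongrLeft_apply_eq_cast, cast_eq]
    simp
  have hpre : sortRegion σ = MeasurableEquiv.piCongrLeft (fun _ => ℝ) σ.symm ⁻¹' sortRegion 1 := by
    rw [hcomp]
    rfl
  rw [hpre, hσ.measure_preimage (measurableSet_sortRegion 1).nullMeasurableSet]

lemma measure_sortRegion [IsProbabilityMeasure μ] [NullSingletonClass μ]
    (σ : Equiv.Perm (Fin n)) :
    Measure.pi (fun _ : Fin n => μ) (sortRegion σ) = (n ! : ℝ≥0∞)⁻¹ := by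
  have hsum : ∑ τ : Equiv.Perm (Fin n), Measure.pi (fun _ => μ) (sortRegion τ) = 1 := by
    rw [← tsum_fintype (L := .unconditional _),
      ← measure_iUnion pairwise_disjoint_sortRegion measurableSet_sortRegion,
      ← measure_univ (μ := Measure.pi fun _ : Fin n => μ), ← Set.univ_inter (⋃ τ, sortRegion τ),
      measure_inter_conull (measure_compl_iUnion_sortRegion μ)]
  rw [Finset.sum_congr rfl fun τ _ => measure_sortRegion_eq_measure_sortRegion_one μ τ,
    Finset.sum_const, Finset.card_univ, Fintype.card_perm, Fintype.card_fin,
    nsmul_eq_mul] at hsum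
  rw [measure_sortRegion_eq_measure_sortRegion_one μ σ]
  exact ENNReal.eq_inv_of_mul_eq_one_left (by rwa [mul_comm])

lemma IsRankStatistic.map_pi {β : Type*} [MeasurableSpace β] {g : (Fin n → ℝ) → β}
    (hg : IsRankStatistic g) (hgm : Measurable g) [IsProbabilityMeasure μ]
    [NullSingletonClass μ] :
    (Measure.pi fun _ : Fin n => μ).map g =
      (n ! : ℝ≥0∞)⁻¹ • ∑ σ : Equiv.Perm (Fin n), Measure.dirac (g (rankVector σ)) := by
  have hdecomp : Measure.pi (fun _ : Fin n => μ) =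
      Measure.sum fun σ => (Measure.pi fun _ => μ).restrict (sortRegion σ) := by
    rw [← Measure.restrict_iUnion pairwise_disjoint_sortRegion measurableSet_sortRegion,
      Measure.restrict_congr_set (ae_eq_univ.2 (measure_compl_iUnion_sortRegion μ)),
      Measure.restrict_univ]
  rw [hdecomp, Measure.map_sum hgm.aemeasurable, Measure.sum_fintype, Finset.smul_sum]
  refine Finset.sum_congr rfl fun σ _ => ?_
  rw [Measure.map_congr (g := fun _ => g (rankVector σ)), Measure.map_const,
    Measure.restrict_apply_univ, measure_sortRegion μ σ]
  exact ae_restrict_of_forall_mem (measurableSet_sortRegion σ) fun _ hx =>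
    hg.eq_of_mem_sortRegion hx

end Measure

section Wilcoxon

variable {m h : ℕ}

lemma wilcoxonStat_congr {Ω Ω' : Type*} {h τ : ℕ} {X : ℕ → Ω → ℝ} {Y : ℕ → Ω' → ℝ} {ω : Ω}
    {ω' : Ω'} (hXY : ∀ i ∈ Finset.Ioc (τ - h) (τ + h), ∀ j ∈ Finset.Ioc (τ - h) (τ + h),
      (X j ω ≤ X i ω ↔ Y j ω' ≤ Y i ω')) :
    wilcoxonStat h X τ ω = wilcoxonStat h Y τ ω' :=
  Finset.sum_congr rfl fun i hi => Finset.sum_congr rfl fun j hj =>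
    if_congr (hXY i (Finset.Ioc_subset_Ioc (Nat.sub_le τ h) le_rfl hi) j hj) rfl rfl

lemma measurable_wilcoxonStat {Ω : Type*} [MeasurableSpace Ω] {X : ℕ → Ω → ℝ}
    (hX : ∀ k, Measurable (X k)) (τ : ℕ) : Measurable (wilcoxonStat h X τ) :=
  Finset.measurable_sum _ fun i _ => Finset.measurable_sum _ fun j _ =>
    Measurable.ite (measurableSet_le (hX j) (hX i)) measurable_const measurable_const

/-- The `k`-th entry of `x`, counting from `1` as the statistic does; junk value `0` for `k = 0`
and `k > m`. -/
noncomputable def oneBasedCoord (m k : ℕ) (x : Fin m → ℝ) : ℝ :=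
  if hk : k - 1 < m then x ⟨k - 1, hk⟩ else 0

lemma measurable_oneBasedCoord (k : ℕ) : Measurable (oneBasedCoord m k) := by
  unfold oneBasedCoord
  split_ifs
  exacts [measurable_pi_apply _, measurable_const]

lemma sub_one_lt_of_mem_window {τ k : ℕ} (hτ : τ ∈ Finset.Icc h (m - h))
    (hk : k ∈ Finset.Ioc (τ - h) (τ + h)) : k - 1 < m ∧ k - 1 + 1 = k := by
  simp only [Finset.mem_Icc, Finset.mem_Ioc] at hτ hk
  omega

noncomputable def wilcoxonVector (m h : ℕ) (x : Fin m → ℝ) (τ : Finset.Icc h (m - h)) : ℝ :=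
  wilcoxonStat h (oneBasedCoord m) τ x

lemma measurable_wilcoxonVector : Measurable (wilcoxonVector m h) :=
  measurable_pi_lambda _ fun τ => measurable_wilcoxonStat measurable_oneBasedCoord τ

lemma isRankStatistic_wilcoxonVector : IsRankStatistic (wilcoxonVector m h) := by
  intro x y hxy
  funext τ
  refine wilcoxonStat_congr fun i hi j hj => ?_
  simp only [oneBasedCoord, dif_pos (sub_one_lt_of_mem_window τ.2 hi).1,
    dif_pos (sub_one_lt_of_mem_window τ.2 hj).1, hxy]

lemma wilcoxonStat_eq_wilcoxonVector_comp {Ω : Type*} (X : ℕ → Ω → ℝ) :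
    (fun ω (τ : Finset.Icc h (m - h)) => wilcoxonStat h X τ ω) =
      wilcoxonVector m h ∘ fun ω (i : Fin m) => X (i + 1) ω := by
  funext ω τ
  refine wilcoxonStat_congr fun i hi j hj => ?_
  obtain ⟨hi, hi'⟩ := sub_one_lt_of_mem_window τ.2 hi
  obtain ⟨hj, hj'⟩ := sub_one_lt_of_mem_window τ.2 hj
  simp only [oneBasedCoord, dif_pos hi, dif_pos hj, hi', hj']

lemma map_sample_eq_pi {Ω : Type*} [MeasurableSpace Ω] {P : Measure Ω} [IsProbabilityMeasure P]
    {X : ℕ → Ω → ℝ} {μ : Measure ℝ} (hX : ∀ k, Measurable (X k))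
    (hindep : iIndepFun (fun i : Fin m => X (i + 1)) P)
    (hlaw : ∀ k ∈ Finset.Icc 1 m, P.map (X k) = μ) :
    P.map (fun ω (i : Fin m) => X (i + 1) ω) = Measure.pi fun _ => μ := by
  rw [hindep.map_fun_eq_pi_map fun i => (hX _).aemeasurable]
  congr with i : 1
  exact hlaw _ (Finset.mem_Icc.2 ⟨by omega, i.2⟩)

lemma map_wilcoxonStat_eq_sum_dirac {Ω : Type*} [MeasurableSpace Ω] {P : Measure Ω}
    [IsProbabilityMeasure P] {X : ℕ → Ω → ℝ} {μ : Measure ℝ} [IsProbabilityMeasure μ]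
    [NullSingletonClass μ] (hX : ∀ k, Measurable (X k))
    (hindep : iIndepFun (fun i : Fin m => X (i + 1)) P)
    (hlaw : ∀ k ∈ Finset.Icc 1 m, P.map (X k) = μ) :
    P.map (fun ω (τ : Finset.Icc h (m - h)) => wilcoxonStat h X τ ω) =
      (m ! : ℝ≥0∞)⁻¹ •
        ∑ σ : Equiv.Perm (Fin m), Measure.dirac (wilcoxonVector m h (rankVector σ)) := by
  rw [wilcoxonStat_eq_wilcoxonVector_comp,
    ← Measure.map_map measurable_wilcoxonVector (measurable_pi_lambda _ fun i => hX _),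
    map_sample_eq_pi hX hindep hlaw,
    isRankStatistic_wilcoxonVector.map_pi μ measurable_wilcoxonVector]

end Wilcoxon

theorem stmt12_general
    {Ω₁ Ω₂ : Type*} [MeasurableSpace Ω₁] [MeasurableSpace Ω₂]
    (P₁ : Measure Ω₁) (P₂ : Measure Ω₂)
    [IsProbabilityMeasure P₁] [IsProbabilityMeasure P₂]
    (m h : ℕ)
    (X : ℕ → Ω₁ → ℝ) (Y : ℕ → Ω₂ → ℝ)
    (hXmeas : ∀ i, Measurable (X i)) (hYmeas : ∀ i, Measurable (Y i))
    (μX μY : Measure ℝ) [IsProbabilityMeasure μX] [IsProbabilityMeasure μY]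
    (hXindep : iIndepFun (fun i : Fin m => X (i.val + 1)) P₁)
    (hYindep : iIndepFun (fun i : Fin m => Y (i.val + 1)) P₂)
    (hXlaw : ∀ i ∈ Finset.Icc 1 m, Measure.map (X i) P₁ = μX)
    (hYlaw : ∀ i ∈ Finset.Icc 1 m, Measure.map (Y i) P₂ = μY)
    (hXatomless : ∀ x : ℝ, μX {x} = 0)
    (hYatomless : ∀ y : ℝ, μY {y} = 0) :
    Measure.map
        (fun ω (τ : Finset.Icc h (m - h)) => wilcoxonStat h X (τ : ℕ) ω) P₁
      = Measure.map
        (fun ω (τ : Finset.Icc h (m - h)) => wilcoxonStat h Y (τ : ℕ) ω) P₂ := by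
  have : NullSingletonClass μX := ⟨hXatomless⟩
  have : NullSingletonClass μY := ⟨hYatomless⟩
  rw [map_wilcoxonStat_eq_sum_dirac hXmeas hXindep hXlaw,
    map_wilcoxonStat_eq_sum_dirac hYmeas hYindep hYlaw]

/-- **Distribution-freeness of the windowed Wilcoxon statistics.**
If `X₁,…,X_m` are iid with an atomless distribution and `Y₁,…,Y_m` are iid with a
(possibly different) atomless distribution, then the random vectors
`(T_τ(X))_{h≤τ≤m−h}` and `(T_τ(Y))_{h≤τ≤m−h}` have the same joint distribution. -/
theorem stmt12
    {Ω₁ Ω₂ : Type*} [MeasurableSpace Ω₁] [MeasurableSpace Ω₂]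
    (P₁ : Measure Ω₁) (P₂ : Measure Ω₂)
    [IsProbabilityMeasure P₁] [IsProbabilityMeasure P₂]
    (m h : ℕ) (hh : 1 ≤ h) (hm : 2 * h ≤ m)
    (X : ℕ → Ω₁ → ℝ) (Y : ℕ → Ω₂ → ℝ)
    (hXmeas : ∀ i, Measurable (X i)) (hYmeas : ∀ i, Measurable (Y i))
    (μX μY : Measure ℝ) [IsProbabilityMeasure μX] [IsProbabilityMeasure μY]
    (hXindep : iIndepFun (fun i : Fin m => X (i.val + 1)) P₁)
    (hYindep : iIndepFun (fun i : Fin m => Y (i.val + 1)) P₂)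
    (hXlaw : ∀ i ∈ Finset.Icc 1 m, Measure.map (X i) P₁ = μX)
    (hYlaw : ∀ i ∈ Finset.Icc 1 m, Measure.map (Y i) P₂ = μY)
    (hXatomless : ∀ x : ℝ, μX {x} = 0)
    (hYatomless : ∀ y : ℝ, μY {y} = 0) :
    Measure.map
        (fun ω (τ : Finset.Icc h (m - h)) => wilcoxonStat h X (τ : ℕ) ω) P₁
      = Measure.map
        (fun ω (τ : Finset.Icc h (m - h)) => wilcoxonStat h Y (τ : ℕ) ω) P₂ :=
  stmt12_general P₁ P₂ m h X Y hXmeas hYmeas μX μY hXindep hYindep hXlaw hYlaw hXatomless hYatomless
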